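/- arXiv:2202.04050 — 2 statements merged into one kernel-verified Lean document; each statement's English description precedes it below -/
import Mathlib

section
/- Let N ≥ 2 and let σ, σ' : Fin T → {0,1} be two sequences that are reverses of each other, i.e., σ'(t) = σ(T−1−t) for all t. Define Γ_σ(k,ℓ) = ∏_{j=k}^{ℓ} (1 − σ(j)/N). Then ∑_{t=0}^{T−1} ∑_{ℓ=0}^{t} Γ_σ(ℓ,t) = ∑_{t=0}^{T−1} ∑_{ℓ=0}^{t} Γ_{σ'}(ℓ,t). -/
/-! Reversing time maps the triangle `{(ℓ, t) : ℓ ≤ t < T}` onto itself via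
`(ℓ, t) ↦ (T - 1 - t, T - 1 - ℓ)`, and carries the window `[ℓ, t]` of the reversed sequence
onto the window `[T - 1 - t, T - 1 - ℓ]` of the original one. So both double sums run over the
same family of window products. -/

open Finset

theorem sum_range_sum_range_succ_reflect {M : Type*} [AddCommMonoid M] (g : ℕ → ℕ → M)
    (T : ℕ) :
    ∑ t ∈ range T, ∑ ℓ ∈ range (t + 1), g ℓ t
      = ∑ t ∈ range T, ∑ ℓ ∈ range (t + 1), g (T - 1 - t) (T - 1 - ℓ) := by
  simp only [sum_sigma']
  refine sum_nbij' (fun p => ⟨T - 1 - p.2, T - 1 - p.1⟩) (fun p => ⟨T - 1 - p.2, T - 1 - p.1⟩)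
    ?_ ?_ ?_ ?_ ?_ <;> rintro ⟨t, ℓ⟩ hp <;> simp only [mem_sigma, mem_range] at hp ⊢
  · omega
  · omega
  · simp only [Sigma.mk.injEq, heq_eq_eq]; omega
  · simp only [Sigma.mk.injEq, heq_eq_eq]; omega
  · congr 1 <;> omega

theorem prod_Icc_reflect {M : Type*} [CommMonoid M] (f : ℕ → M) {ℓ t T : ℕ} (hℓt : ℓ ≤ t)
    (htT : t < T) :
    ∏ j ∈ Icc ℓ t, f (T - 1 - j) = ∏ j ∈ Icc (T - 1 - t) (T - 1 - ℓ), f j := by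
  rw [← Ico_add_one_right_eq_Icc, prod_Ico_reflect f ℓ (by omega : t + 1 ≤ T - 1 + 1),
    ← Ico_add_one_right_eq_Icc]
  congr 2 <;> omega

theorem sum_range_sum_range_succ_prod_Icc_eq_of_reflect {R : Type*} [CommSemiring R]
    {T : ℕ} {f g : ℕ → R} (hfg : ∀ t < T, g t = f (T - 1 - t)) :
    ∑ t ∈ range T, ∑ ℓ ∈ range (t + 1), ∏ j ∈ Icc ℓ t, f j
      = ∑ t ∈ range T, ∑ ℓ ∈ range (t + 1), ∏ j ∈ Icc ℓ t, g j := by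
  rw [sum_range_sum_range_succ_reflect (fun ℓ t => ∏ j ∈ Icc ℓ t, f j)]
  refine sum_congr rfl fun t ht => sum_congr rfl fun ℓ hℓ => ?_
  rw [mem_range] at ht hℓ
  rw [← prod_Icc_reflect f (by omega) ht]
  exact prod_congr rfl fun j hj => (hfg j ((mem_Icc.1 hj).2.trans_lt ht)).symm

theorem stmt_3_general (N : ℕ) (T : ℕ) (σ σ' : ℕ → ℝ)
    (hrev : ∀ t < T, σ' t = σ (T - 1 - t)) :
    ∑ t ∈ Finset.range T, ∑ ℓ ∈ Finset.range (t + 1),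
        ∏ j ∈ Finset.Icc ℓ t, (1 - σ j / N)
      = ∑ t ∈ Finset.range T, ∑ ℓ ∈ Finset.range (t + 1),
        ∏ j ∈ Finset.Icc ℓ t, (1 - σ' j / N) :=
  sum_range_sum_range_succ_prod_Icc_eq_of_reflect fun t ht => by rw [hrev t ht]

theorem stmt_3 (N : ℕ) (hN : 2 ≤ N) (T : ℕ) (σ σ' : ℕ → ℝ)
    (hσ : ∀ t, σ t = 0 ∨ σ t = 1)
    (hrev : ∀ t < T, σ' t = σ (T - 1 - t)) :
    ∑ t ∈ Finset.range T, ∑ ℓ ∈ Finset.range (t + 1),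
        ∏ j ∈ Finset.Icc ℓ t, (1 - σ j / N)
      = ∑ t ∈ Finset.range T, ∑ ℓ ∈ Finset.range (t + 1),
        ∏ j ∈ Finset.Icc ℓ t, (1 - σ' j / N) :=
  stmt_3_general N T σ σ' hrev
end

section
/- Fix a real q ∈ (0,1). For two 0-1 sequences σ, σ' on {1,…,T} with the same number of zeros, if for every interval [k,ℓ] ⊆ {1,…,T} the number of zeros of σ' in [k,ℓ] is at least the number of zeros of σ in [k,ℓ], then ∑_{t=1}^{T} ∑_{ℓ=1}^{t} ∏_{j=ℓ}^{t} q^{σ(j)} ≤ ∑_{t=1}^{T} ∑_{ℓ=1}^{t} ∏_{j=ℓ}^{t} q^{σ'(j)}. -/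
open Finset

/-! For `0 ≤ q ≤ 1` and a 0-1 sequence, the product of `q ^ σ j` over a window is `q` to the number
of ones in the window, which is the window length minus the number of zeros. More zeros in every
window thus means a larger product for every pair `ℓ ≤ t`, and the double sums compare termwise. -/

variable {ι : Type*} {s : Finset ι}

lemma sum_add_card_filter_eq_zero {f : ι → ℕ} (hf : ∀ j ∈ s, f j ≤ 1) :
    ∑ j ∈ s, f j + #{j ∈ s | f j = 0} = #s := by
  rw [card_filter, ← sum_add_distrib, card_eq_sum_ones]
  refine sum_congr rfl fun j hj => ?_
  have := hf j hj
  split_ifs <;> omega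

lemma prod_pow_le_prod_pow_of_card_filter_eq_zero_le {q : ℝ} (hq0 : 0 ≤ q) (hq1 : q ≤ 1)
    {f g : ι → ℕ} (hf : ∀ j ∈ s, f j ≤ 1) (hg : ∀ j ∈ s, g j ≤ 1)
    (hzeros : #{j ∈ s | f j = 0} ≤ #{j ∈ s | g j = 0}) :
    ∏ j ∈ s, q ^ f j ≤ ∏ j ∈ s, q ^ g j := by
  rw [prod_pow_eq_pow_sum, prod_pow_eq_pow_sum]
  refine pow_le_pow_of_le_one hq0 hq1 ?_
  have := sum_add_card_filter_eq_zero hf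
  have := sum_add_card_filter_eq_zero hg
  omega

theorem stmt_4_general (q : ℝ) (hq0 : 0 < q) (hq1 : q < 1) (T : ℕ) (σ σ' : ℕ → ℕ)
    (hσ : ∀ j, σ j = 0 ∨ σ j = 1) (hσ' : ∀ j, σ' j = 0 ∨ σ' j = 1)
    (hdom : ∀ k ℓ, 1 ≤ k → ℓ ≤ T →
      ((Finset.Icc k ℓ).filter (fun j => σ j = 0)).card
        ≤ ((Finset.Icc k ℓ).filter (fun j => σ' j = 0)).card) :
    ∑ t ∈ Finset.Icc 1 T, ∑ ℓ ∈ Finset.Icc 1 t, ∏ j ∈ Finset.Icc ℓ t, q ^ σ j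
      ≤ ∑ t ∈ Finset.Icc 1 T, ∑ ℓ ∈ Finset.Icc 1 t, ∏ j ∈ Finset.Icc ℓ t, q ^ σ' j := by
  have h01 : ∀ (τ : ℕ → ℕ), (∀ j, τ j = 0 ∨ τ j = 1) → ∀ j, τ j ≤ 1 := fun τ hτ j => by
    rcases hτ j with h | h <;> omega
  refine sum_le_sum fun t ht => sum_le_sum fun ℓ hℓ => ?_
  rw [mem_Icc] at ht hℓ
  exact prod_pow_le_prod_pow_of_card_filter_eq_zero_le hq0.le hq1.le
    (fun j _ => h01 σ hσ j) (fun j _ => h01 σ' hσ' j) (hdom ℓ t hℓ.1 ht.2)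

theorem stmt_4 (q : ℝ) (hq0 : 0 < q) (hq1 : q < 1) (T : ℕ) (σ σ' : ℕ → ℕ)
    (hσ : ∀ j, σ j = 0 ∨ σ j = 1) (hσ' : ∀ j, σ' j = 0 ∨ σ' j = 1)
    (hsame : ((Finset.Icc 1 T).filter (fun j => σ j = 0)).card
      = ((Finset.Icc 1 T).filter (fun j => σ' j = 0)).card)
    (hdom : ∀ k ℓ, 1 ≤ k → ℓ ≤ T →
      ((Finset.Icc k ℓ).filter (fun j => σ j = 0)).card
        ≤ ((Finset.Icc k ℓ).filter (fun j => σ' j = 0)).card) :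
    ∑ t ∈ Finset.Icc 1 T, ∑ ℓ ∈ Finset.Icc 1 t, ∏ j ∈ Finset.Icc ℓ t, q ^ σ j
      ≤ ∑ t ∈ Finset.Icc 1 T, ∑ ℓ ∈ Finset.Icc 1 t, ∏ j ∈ Finset.Icc ℓ t, q ^ σ' j :=
  stmt_4_general q hq0 hq1 T σ σ' hσ hσ' hdom
end
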